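/- arXiv:1105.3249 — 3 statements merged into one kernel-verified Lean document; each statement's English description precedes it below -/
import Mathlib

section
/- Let ε : ℤ^M → ℤ^{M₁} ⊕ ℤ^M be inclusion-type maps and let A = [[0, λ₁], [ε₁, B]] be a block endomorphism of G₁ ⊕ G where G₁, G are abelian groups, λ₁ : G → G₁, ε₁ : G₁ → G, B : G → G group homomorphisms, and set L = ε₁ ∘ λ₁ + B : G → G. Then (G₁ ⊕ G)/(id − A)(G₁ ⊕ G) ≅ G/(id − L)G. -/
/-!
The map `Φ (g, h) = ε₁ g + h` from `G₁ × G` onto `G` satisfies `Φ ∘ (id − A) = (id − L) ∘ snd`,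
so it carries the range of `id − A` onto the range of `id − L`; and its kernel, the elements
`(g, -ε₁ g) = (id − A) (g, 0)`, lies in the range of `id − A`. Hence `Φ` descends to an
isomorphism of the cokernels.
-/

open Function QuotientAddGroup

namespace QuotientAddGroup

variable {M N : Type*} [AddCommGroup M] [AddCommGroup N]

noncomputable def equivOfSurjectiveOfKerLE {Φ : M →+ N} (hΦ : Surjective Φ)
    {S : AddSubgroup M} {T : AddSubgroup N} (hST : S.map Φ = T) (hS : Φ.ker ≤ S) :
    M ⧸ S ≃+ N ⧸ T :=
  liftEquiv (φ := (mk' T).comp Φ) S ((mk'_surjective T).comp hΦ) <| by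
    rw [← AddMonoidHom.comap_ker, ker_mk', ← hST, AddSubgroup.comap_map_eq, sup_eq_left.2 hS]

end QuotientAddGroup

section BlockEndomorphism

variable {G₁ G : Type*} [AddCommGroup G₁] [AddCommGroup G]
  (lam₁ : G →+ G₁) (eps₁ : G₁ →+ G) (B : G →+ G)

/-- The block endomorphism `[[0, λ₁], [ε₁, B]]` of `G₁ × G`. -/
def blockEnd : G₁ × G →+ G₁ × G :=
  (lam₁.comp (AddMonoidHom.snd G₁ G)).prod
    (eps₁.comp (AddMonoidHom.fst G₁ G) + B.comp (AddMonoidHom.snd G₁ G))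

def collapse : G₁ × G →+ G :=
  eps₁.comp (AddMonoidHom.fst G₁ G) + AddMonoidHom.snd G₁ G

theorem collapse_surjective : Surjective (collapse eps₁) := fun h =>
  ⟨(0, h), by simp [collapse]⟩

theorem collapse_comp_id_sub_blockEnd :
    (collapse eps₁).comp (AddMonoidHom.id _ - blockEnd lam₁ eps₁ B) =
      (AddMonoidHom.id G - (eps₁.comp lam₁ + B)).comp (AddMonoidHom.snd G₁ G) := by
  ext ⟨g, h⟩
  simp only [collapse, blockEnd, AddMonoidHom.comp_sub, AddMonoidHom.comp_id,
    AddMonoidHom.sub_comp, AddMonoidHom.id_comp, AddMonoidHom.sub_apply, AddMonoidHom.add_apply,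
    AddMonoidHom.coe_comp, AddMonoidHom.coe_fst, AddMonoidHom.coe_snd, AddMonoidHom.prod_apply,
    comp_apply]
  abel

theorem ker_collapse_le_range_id_sub_blockEnd :
    (collapse eps₁).ker ≤ (AddMonoidHom.id _ - blockEnd lam₁ eps₁ B).range := by
  rintro ⟨g, h⟩ hgh
  have hh : h = -eps₁ g := eq_neg_of_add_eq_zero_right hgh
  exact ⟨(g, 0), by simp [blockEnd, hh]⟩

theorem map_collapse_range_id_sub_blockEnd :
    (AddMonoidHom.id _ - blockEnd lam₁ eps₁ B).range.map (collapse eps₁) =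
      (AddMonoidHom.id G - (eps₁.comp lam₁ + B)).range := by
  rw [AddMonoidHom.map_range, collapse_comp_id_sub_blockEnd, AddMonoidHom.range_comp,
    AddMonoidHom.range_eq_top.2 Prod.snd_surjective, ← AddMonoidHom.range_eq_map]

end BlockEndomorphism

/-- for abelian groups `G₁, G` and homomorphisms `λ₁ : G → G₁`,
`ε₁ : G₁ → G`, `B : G → G`, let `A` be the block endomorphism
`A(g, h) = (λ₁ h, ε₁ g + B h)` of `G₁ ⊕ G` and `L = ε₁ ∘ λ₁ + B : G → G`.
Then `(G₁ ⊕ G)/(id − A)(G₁ ⊕ G) ≅ G/(id − L)G`. -/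
theorem coker_block_iso {G₁ G : Type*} [AddCommGroup G₁] [AddCommGroup G]
    (lam₁ : G →+ G₁) (eps₁ : G₁ →+ G) (B : G →+ G) :
    Nonempty
      (((G₁ × G) ⧸
          (AddMonoidHom.id (G₁ × G) -
            ((lam₁.comp (AddMonoidHom.snd G₁ G)).prod
              (eps₁.comp (AddMonoidHom.fst G₁ G) + B.comp (AddMonoidHom.snd G₁ G)))).range)
        ≃+
        (G ⧸ (AddMonoidHom.id G - (eps₁.comp lam₁ + B)).range)) :=
  ⟨equivOfSurjectiveOfKerLE (collapse_surjective eps₁)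
    (map_collapse_range_id_sub_blockEnd lam₁ eps₁ B)
    (ker_collapse_le_range_id_sub_blockEnd lam₁ eps₁ B)⟩
end

section
/- For the Dyck shift D_N (N ≥ 2) with bracket alphabet {α₁,…,α_N, β₁,…,β_N}, every word of the form β_{μ₁}⋯β_{μ_l} (consisting only of closing-bracket symbols) is an l-synchronizing word of D_N. -/
/-- The alphabet of the Dyck shift `D_N`: `Sum.inl i` is the opening bracket `α_i = (_i`
and `Sum.inr j` is the closing bracket `β_j = )_j`. -/
abbrev DyckSym (N : ℕ) := Fin N ⊕ Fin N

/-- One step of reduction in the Dyck inverse monoid.  The state `some (bs, as)` records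
the nonzero reduced form `β_{bs} α_{as}` (with `as` the stack of pending `α`s, most
recent first); `none` is the zero element.  The relations are `α_i β_j = 1` if `i = j`
and `α_i β_j = 0` otherwise. -/
def dyckStep {N : ℕ} :
    Option (List (Fin N) × List (Fin N)) → DyckSym N →
      Option (List (Fin N) × List (Fin N))
  | none, _ => none
  | some (bs, as), Sum.inl i => some (bs, i :: as)
  | some (bs, as), Sum.inr j =>
    match as with
    | [] => some (j :: bs, [])
    | i :: as' => if i = j then some (bs, as') else none

/-- A word is admissible for the Dyck shift `D_N` iff its product in the Dyck inverse
monoid is nonzero. -/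
def dyckAdm {N : ℕ} (w : List (DyckSym N)) : Prop :=
  w.foldl dyckStep (some ([], [])) ≠ none

/-- The language `B_*(D_N)` of the Dyck shift. -/
def dyckLang (N : ℕ) : Set (List (DyckSym N)) := {w | dyckAdm w}

/-- `Γ_l^-` of a word with respect to a language `L`. -/
def GammaL {B : Type*} (L : Set (List B)) (l : ℕ) (μ : List B) : Set (List B) :=
  {ν | ν.length = l ∧ ν ∈ L ∧ ν ++ μ ∈ L}

/-- `μ` is an `l`-synchronizing word with respect to the language `L`. -/
def LSyncL {B : Type*} (L : Set (List B)) (l : ℕ) (μ : List B) : Prop :=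
  μ ∈ L ∧ ∀ ω : List B, μ ++ ω ∈ L → GammaL L l μ = GammaL L l (μ ++ ω)

/-! In a reduced form `β_{bs} α_{as}` the closing brackets `bs` are never touched again, so
only the stack `as` of pending opening brackets matters for admissibility of continuations.
After a word `ν` of length `l` that stack has length at most `l`, so the `l` closing brackets
of `μ` either annihilate the product or empty the stack; in both cases the admissible
continuations of `ν μ` are those of `μ`. -/

section DyckStep

variable {N : ℕ}

lemma foldl_dyckStep_none (w : List (DyckSym N)) : w.foldl dyckStep none = none := by
  induction w with
  | nil => rfl
  | cons a w ih => simpa [dyckStep] using ih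

lemma dyckAdm_of_append {u v : List (DyckSym N)} (h : dyckAdm (u ++ v)) : dyckAdm u := by
  intro hu
  apply h
  rw [List.foldl_append, hu, foldl_dyckStep_none]

lemma dyckStep_map_append_fst (bs : List (Fin N))
    (s : Option (List (Fin N) × List (Fin N))) (a : DyckSym N) :
    dyckStep (s.map fun p => (p.1 ++ bs, p.2)) a =
      (dyckStep s a).map fun p => (p.1 ++ bs, p.2) := by
  rcases s with _ | ⟨c, _ | ⟨i, as⟩⟩ <;> rcases a with _ | j
  all_goals try rfl
  by_cases h : i = j <;> simp [dyckStep, h]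

lemma foldl_dyckStep_map_append_fst (w : List (DyckSym N)) (bs : List (Fin N))
    (s : Option (List (Fin N) × List (Fin N))) :
    w.foldl dyckStep (s.map fun p => (p.1 ++ bs, p.2)) =
      (w.foldl dyckStep s).map fun p => (p.1 ++ bs, p.2) := by
  induction w generalizing s with
  | nil => rfl
  | cons a w ih => simp only [List.foldl_cons, dyckStep_map_append_fst, ih]

lemma foldl_dyckStep_some_nil_eq_none_iff (w : List (DyckSym N)) (bs : List (Fin N)) :
    w.foldl dyckStep (some (bs, [])) = none ↔ w.foldl dyckStep (some ([], [])) = none := by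
  simpa using congrArg (· = none) (foldl_dyckStep_map_append_fst w bs (some ([], [])))

lemma dyckStep_snd_length_le {s : List (Fin N) × List (Fin N)} {a : DyckSym N}
    {t : List (Fin N) × List (Fin N)} (h : dyckStep (some s) a = some t) :
    t.2.length ≤ s.2.length + 1 := by
  obtain ⟨bs, _ | ⟨i, as⟩⟩ := s <;> rcases a with _ | j <;> simp only [dyckStep] at h
  all_goals grind

lemma foldl_dyckStep_snd_length_le {w : List (DyckSym N)} {s t : List (Fin N) × List (Fin N)}
    (h : w.foldl dyckStep (some s) = some t) : t.2.length ≤ s.2.length + w.length := by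
  induction w generalizing s with
  | nil => cases h; simp
  | cons a w ih =>
    rcases hs : dyckStep (some s) a with _ | s'
    · simp [hs, foldl_dyckStep_none] at h
    · have := ih (by simpa [hs] using h)
      have := dyckStep_snd_length_le hs
      simp only [List.length_cons]
      omega

lemma foldl_dyckStep_betas_nil (μ bs : List (Fin N)) :
    (μ.map Sum.inr).foldl dyckStep (some (bs, [])) = some (μ.reverse ++ bs, []) := by
  induction μ generalizing bs with
  | nil => rfl
  | cons j μ ih => simp [dyckStep, ih]

lemma foldl_dyckStep_betas_snd_eq_nil {μ : List (Fin N)} {s t : List (Fin N) × List (Fin N)}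
    (hs : s.2.length ≤ μ.length) (h : (μ.map Sum.inr).foldl dyckStep (some s) = some t) :
    t.2 = [] := by
  induction μ generalizing s with
  | nil =>
    cases h
    exact List.eq_nil_of_length_eq_zero (Nat.le_zero.mp hs)
  | cons j μ ih =>
    obtain ⟨bs, _ | ⟨i, as⟩⟩ := s
    · rw [List.map_cons, List.foldl_cons, dyckStep, foldl_dyckStep_betas_nil] at h
      cases h
      rfl
    · by_cases hij : i = j
      · simp only [List.map_cons, List.foldl_cons, dyckStep, hij, if_true] at h
        exact ih (by simpa using hs) h
      · simp [dyckStep, hij, foldl_dyckStep_none] at h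

end DyckStep

theorem dyck_beta_word_lSync_general (N : ℕ) (μ : List (Fin N)) :
    LSyncL (dyckLang N) μ.length (μ.map Sum.inr) := by
  have hμ : (μ.map Sum.inr).foldl dyckStep (some ([], [])) = some (μ.reverse, []) := by
    simpa using foldl_dyckStep_betas_nil μ []
  refine ⟨by simp [dyckLang, dyckAdm, hμ], fun ω hμω => ?_⟩
  have hω : dyckAdm ω := by
    simpa [dyckLang, dyckAdm, List.foldl_append, hμ, foldl_dyckStep_some_nil_eq_none_iff] using hμω
  ext ν
  refine and_congr_right fun hν => and_congr_right fun hνadm => ⟨fun hνμ => ?_, fun h =>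
    dyckAdm_of_append (by rwa [← List.append_assoc] at h)⟩
  obtain ⟨s, hs⟩ := Option.ne_none_iff_exists'.mp hνadm
  obtain ⟨t, ht⟩ := Option.ne_none_iff_exists'.mp
    (show (μ.map Sum.inr).foldl dyckStep (some s) ≠ none by
      simpa [dyckLang, dyckAdm, List.foldl_append, hs] using hνμ)
  have hst : t.2 = [] := foldl_dyckStep_betas_snd_eq_nil
    (by simpa [hν] using foldl_dyckStep_snd_length_le hs) ht
  obtain ⟨bs, as⟩ := t
  cases hst
  show dyckAdm _
  simpa [dyckAdm, List.foldl_append, hs, ht, foldl_dyckStep_some_nil_eq_none_iff] using hω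

/-- in the Dyck shift `D_N` (`N ≥ 2`), every word
`β_{μ₁} ⋯ β_{μ_l}` consisting only of closing brackets is `l`-synchronizing. -/
theorem dyck_beta_word_lSync (N : ℕ) (hN : 2 ≤ N) (μ : List (Fin N)) :
    LSyncL (dyckLang N) μ.length (μ.map Sum.inr) :=
  dyck_beta_word_lSync_general N μ
end

section
/- In the Dyck shift D_N, two words β_{μ₁}⋯β_{μ_l} and β_{ν₁}⋯β_{ν_l} consisting only of closing-bracket symbols are l-past equivalent (i.e. Γ_l^-(β_{μ₁}⋯β_{μ_l}) = Γ_l^-(β_{ν₁}⋯β_{ν_l})) if and only if μ₁⋯μ_l = ν₁⋯ν_l. -/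
lemma dyck_foldl_none {N : ℕ} (l : List (DyckSym N)) :
    l.foldl dyckStep none = none := by
  induction l with
  | nil => rfl
  | cons a l ih => simpa [dyckStep] using ih

lemma dyck_foldl_inl {N : ℕ} (μ : List (Fin N)) :
    ∀ bs as, (μ.map Sum.inl).foldl dyckStep (some (bs, as))
      = some (bs, μ.reverse ++ as) := by
  induction μ with
  | nil => simp
  | cons i μ ih => intro bs as; simp [dyckStep, ih]

lemma dyck_foldl_inr_pop {N : ℕ} (ν : List (Fin N)) :
    ∀ bs as, (ν.map Sum.inr).foldl dyckStep (some (bs, ν ++ as))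
      = some (bs, as) := by
  induction ν with
  | nil => simp
  | cons j ν ih => intro bs as; simp [dyckStep, ih]

lemma dyck_pop_eq {N : ℕ} (ν : List (Fin N)) :
    ∀ bs as, (ν.map Sum.inr).foldl dyckStep (some (bs, as)) ≠ none →
      as.length = ν.length → as = ν := by
  induction ν with
  | nil => intro bs as _ h; exact List.length_eq_zero_iff.mp h
  | cons j ν ih =>
    intro bs as hne hlen
    match as with
    | [] => simp at hlen
    | i :: as' =>
      by_cases hij : i = j
      · subst hij
        have : as' = ν := by
          apply ih bs as'
          · simpa [dyckStep] using hne
          · simpa using hlen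
        rw [this]
      · exfalso
        apply hne
        simp only [List.map_cons, List.foldl_cons, dyckStep, if_neg hij]
        exact dyck_foldl_none _

/-- in the Dyck shift `D_N` (`N ≥ 2`), two words of closing brackets
`β_{μ₁} ⋯ β_{μ_l}` and `β_{ν₁} ⋯ β_{ν_l}` are `l`-past equivalent iff `μ = ν`. -/
theorem dyck_beta_word_past_equiv (N : ℕ) (hN : 2 ≤ N)
    (μ ν : List (Fin N)) (hlen : μ.length = ν.length) :
    GammaL (dyckLang N) μ.length (μ.map Sum.inr)
      = GammaL (dyckLang N) μ.length (ν.map Sum.inr) ↔ μ = ν := by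
  constructor
  · intro h
    set w : List (DyckSym N) := μ.reverse.map Sum.inl with hw
    have hwmem : w ∈ GammaL (dyckLang N) μ.length (μ.map Sum.inr) := by
      refine ⟨by simp [hw], ?_, ?_⟩
      · show dyckAdm w
        unfold dyckAdm
        rw [hw, dyck_foldl_inl]
        simp
      · show dyckAdm (w ++ μ.map Sum.inr)
        unfold dyckAdm
        rw [List.foldl_append, hw, dyck_foldl_inl]
        simp only [List.reverse_reverse, List.append_nil]
        have h2 := dyck_foldl_inr_pop μ [] []
        simp only [List.append_nil] at h2
        rw [h2]; simp
    rw [h] at hwmem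
    have hadm : dyckAdm (w ++ ν.map Sum.inr) := hwmem.2.2
    unfold dyckAdm at hadm
    rw [List.foldl_append, hw, dyck_foldl_inl] at hadm
    simp only [List.reverse_reverse, List.append_nil] at hadm
    exact dyck_pop_eq ν [] μ hadm hlen
  · rintro rfl; rfl
end
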